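/- Under the same hypotheses ensuring ||R(X)||_2/||X||_2 → (1/√2)·max_k α_k with max_k α_k > 0, and using that RoPE preserves the Frobenius norm, the ratio of stable ranks satisfies srank(R(X))/srank(X) → 2/(max_k α_k^2), which lies in [2, d]. -/

import Mathlib

open scoped BigOperators
open Matrix Filter

noncomputable def eNorm {ι : Type*} [Fintype ι] (v : ι → ℝ) : ℝ :=
  Real.sqrt (∑ i, (v i) ^ 2)

noncomputable def frobNorm {ι κ : Type*} [Fintype ι] [Fintype κ]
    (X : Matrix ι κ ℝ) : ℝ :=
  Real.sqrt (∑ i, ∑ j, (X i j) ^ 2)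

noncomputable def specNorm {ι κ : Type*} [Fintype ι] [Fintype κ]
    (X : Matrix ι κ ℝ) : ℝ :=
  sSup {c : ℝ | ∃ v : κ → ℝ, eNorm v = 1 ∧ c = eNorm (X.mulVec v)}

noncomputable def srank {ι κ : Type*} [Fintype ι] [Fintype κ]
    (X : Matrix ι κ ℝ) : ℝ :=
  frobNorm X ^ 2 / specNorm X ^ 2

noncomputable def rot2 (φ : ℝ) : Matrix (Fin 2) (Fin 2) ℝ :=
  !![Real.cos φ, -Real.sin φ; Real.sin φ, Real.cos φ]

noncomputable def blockRot {m : ℕ} (φ : Fin m → ℝ) :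
    Matrix (Fin m × Fin 2) (Fin m × Fin 2) ℝ :=
  fun p q => if p.1 = q.1 then rot2 (φ p.1) p.2 q.2 else 0

noncomputable def ropeRot {m : ℕ} (θ : Fin m → ℝ) (j : ℕ) :
    Matrix (Fin m × Fin 2) (Fin m × Fin 2) ℝ :=
  blockRot (fun k => (j : ℝ) * θ k)

noncomputable def ropeRankOne {n m : ℕ} (θ : Fin m → ℝ)
    (u : ℕ → ℝ) (v : Fin m × Fin 2 → ℝ) :
    Matrix (Fin n) (Fin m × Fin 2) ℝ :=
  fun j => (ropeRot θ ((j : ℕ) + 1)).mulVec (u ((j : ℕ) + 1) • v)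

/-!
Pair the coordinates of `ℝ^{2(m+1)}` into complex numbers `ν_k`; the RoPE rotation at position `j`
then multiplies the `k`-th one by `ζ_k ^ j`, `ζ_k = exp (i θ_k)`. Rotations preserve norms, so
`‖R(X)‖_F² = S_n := ∑_{j ≤ n} u_j² = ‖X‖_F² = ‖X‖_2²` and `srank X = 1`.

For a unit vector `w` with complex coordinates `ω_k`, put `c_k = ν_k conj ω_k`. Then
`‖R(X) w‖² = ∑_j u_j² (Re ∑_k c_k ζ_k^j)²`, and `(Re z)² = (|z|² + Re z²) / 2` splits this into
`S_n / 2 · ∑_k |c_k|²` plus weighted power sums `∑_j u_j² z^j` at `z = ζ_k conj ζ_l` (`k ≠ l`) and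
`z = ζ_k ζ_l`. The irrationality hypotheses keep these `z` away from `1`, so by Abel summation and
the sublinear total variation of `u²` they are `o(n)`, uniformly in `w`. Since
`max_{|ω| = 1} ∑_k |ν_k|² |ω_k|² = max_k α_k²`, this gives `‖R(X)‖_2² / S_n → max_k α_k² / 2`.
-/

open Finset ComplexConjugate

section Norms

variable {ι κ : Type*} [Fintype ι] [Fintype κ]

lemma eNorm_sq (x : ι → ℝ) : eNorm x ^ 2 = ∑ i, x i ^ 2 :=
  Real.sq_sqrt (sum_nonneg fun _ _ => sq_nonneg _)

lemma eNorm_eq_zero {x : ι → ℝ} : eNorm x = 0 ↔ x = 0 := by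
  rw [eNorm, Real.sqrt_eq_zero (sum_nonneg fun _ _ => sq_nonneg _),
    sum_eq_zero_iff_of_nonneg fun _ _ => sq_nonneg _, funext_iff]
  simp

lemma eNorm_nonneg (x : ι → ℝ) : 0 ≤ eNorm x := Real.sqrt_nonneg _

lemma eNorm_smul_sq (c : ℝ) (x : ι → ℝ) : eNorm (c • x) ^ 2 = c ^ 2 * eNorm x ^ 2 := by
  simp only [eNorm_sq, Pi.smul_apply, smul_eq_mul, mul_pow, mul_sum]

lemma frobNorm_sq (X : Matrix ι κ ℝ) : frobNorm X ^ 2 = ∑ i, eNorm (X i) ^ 2 := by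
  simp only [eNorm_sq]
  exact Real.sq_sqrt (sum_nonneg fun _ _ => sum_nonneg fun _ _ => sq_nonneg _)

lemma abs_specNorm_sq_sub_le (X : Matrix ι κ ℝ) {c ε : ℝ}
    (hub : ∀ w, eNorm w = 1 → eNorm (X *ᵥ w) ^ 2 ≤ c + ε)
    (hlb : ∃ w, eNorm w = 1 ∧ c - ε ≤ eNorm (X *ᵥ w) ^ 2) :
    |specNorm X ^ 2 - c| ≤ ε := by
  obtain ⟨w₀, hw₀, hw₀c⟩ := hlb
  have hcε : 0 ≤ c + ε := (sq_nonneg _).trans (hub w₀ hw₀)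
  have hbound : ∀ y ∈ {c | ∃ w, eNorm w = 1 ∧ c = eNorm (X *ᵥ w)}, y ≤ √(c + ε) := by
    rintro _ ⟨w, hw, rfl⟩
    exact (Real.le_sqrt (Real.sqrt_nonneg _) hcε).2 (hub w hw)
  have hupper : specNorm X ≤ √(c + ε) := csSup_le ⟨_, w₀, hw₀, rfl⟩ hbound
  have hlower : eNorm (X *ᵥ w₀) ≤ specNorm X := le_csSup ⟨_, hbound⟩ ⟨w₀, hw₀, rfl⟩
  have hnonneg : 0 ≤ eNorm (X *ᵥ w₀) := Real.sqrt_nonneg _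
  have hsq_upper := pow_le_pow_left₀ (hnonneg.trans hlower) hupper 2
  have hsq_lower := pow_le_pow_left₀ hnonneg hlower 2
  rw [Real.sq_sqrt hcε] at hsq_upper
  rw [abs_sub_le_iff]
  constructor <;> linarith

lemma specNorm_vecMulVec_sq (x : ι → ℝ) {v : κ → ℝ} (hv : eNorm v = 1) :
    specNorm (vecMulVec x v) ^ 2 = eNorm x ^ 2 := by
  have hmulVec : ∀ w, eNorm (vecMulVec x v *ᵥ w) ^ 2 = (v ⬝ᵥ w) ^ 2 * eNorm x ^ 2 := fun w => by
    rw [vecMulVec_mulVec, op_smul_eq_smul, eNorm_smul_sq]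
  have hdot_le : ∀ w, eNorm w = 1 → (v ⬝ᵥ w) ^ 2 ≤ 1 := fun w hw => by
    have := sum_mul_sq_le_sq_mul_sq univ v w
    rwa [← eNorm_sq, ← eNorm_sq, hv, hw, one_pow, one_mul] at this
  have hdot_self : v ⬝ᵥ v = 1 := by
    simp only [dotProduct, ← sq]
    rw [← eNorm_sq, hv, one_pow]
  have h := abs_specNorm_sq_sub_le (vecMulVec x v) (c := eNorm x ^ 2) (ε := 0)
    (fun w hw => by
      rw [hmulVec, add_zero]
      exact mul_le_of_le_one_left (sq_nonneg _) (hdot_le w hw))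
    ⟨v, hv, by rw [hmulVec, hdot_self, one_pow, one_mul, sub_zero]⟩
  rwa [abs_nonpos_iff, sub_eq_zero] at h

lemma srank_vecMulVec {x : ι → ℝ} (hx : x ≠ 0) {v : κ → ℝ} (hv : eNorm v = 1) :
    srank (vecMulVec x v) = 1 := by
  have hfrob : frobNorm (vecMulVec x v) ^ 2 = eNorm x ^ 2 := by
    have hrow : ∀ i, eNorm (vecMulVec x v i) ^ 2 = x i ^ 2 := fun i => by
      rw [show vecMulVec x v i = x i • v from rfl, eNorm_smul_sq, hv, one_pow, mul_one]
    simp only [frobNorm_sq, hrow, eNorm_sq]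
  rw [srank, hfrob, specNorm_vecMulVec_sq x hv,
    div_self (pow_ne_zero 2 (mt eNorm_eq_zero.1 hx))]

end Norms

section WeightedGeomSum

def weightedGeomSum (a : ℕ → ℝ) (n : ℕ) (z : ℂ) : ℂ := ∑ j ∈ Icc 1 n, (a j : ℂ) * z ^ j

lemma norm_geom_sum_le {z : ℂ} (hz : ‖z‖ = 1) (hz1 : z ≠ 1) (k : ℕ) :
    ‖∑ i ∈ range k, z ^ i‖ ≤ 2 / ‖z - 1‖ := by
  rw [geom_sum_eq hz1, norm_div]
  gcongr
  calc ‖z ^ k - 1‖ ≤ ‖z ^ k‖ + ‖(1 : ℂ)‖ := norm_sub_le _ _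
    _ = 2 := by rw [norm_pow, hz, one_pow, norm_one]; norm_num

variable {a : ℕ → ℝ} {C : ℝ}

lemma norm_weightedGeomSum_le (ha : ∀ j, |a j| ≤ C) {z : ℂ} (hz : ‖z‖ = 1) (hz1 : z ≠ 1)
    (n : ℕ) :
    ‖weightedGeomSum a n z‖
      ≤ 2 / ‖z - 1‖ * (2 * C + ∑ j ∈ Icc 1 (n - 1), |a (j + 1) - a j|) := by
  have hC : 0 ≤ C := (abs_nonneg _).trans (ha 0)
  have hK : ∀ k, ‖∑ i ∈ range k, z ^ i‖ ≤ 2 / ‖z - 1‖ := norm_geom_sum_le hz hz1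
  rcases Nat.eq_zero_or_pos n with rfl | hn
  · simp only [weightedGeomSum, Icc_eq_empty_of_lt zero_lt_one, sum_empty, norm_zero]
    positivity
  have hparts := sum_Ico_by_parts (fun j => a j) (fun j => z ^ j) (show 1 < n + 1 by omega)
  simp only [Complex.real_smul, add_tsub_cancel_right] at hparts
  rw [weightedGeomSum, show Icc 1 n = Ico 1 (n + 1) from rfl, hparts,
    show Icc 1 (n - 1) = Ico 1 n from rfl]
  have hterm : ∀ (b : ℝ) k, ‖(b : ℂ) * ∑ i ∈ range k, z ^ i‖ ≤ |b| * (2 / ‖z - 1‖) := fun b k => by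
    rw [norm_mul, Complex.norm_real, Real.norm_eq_abs]
    exact mul_le_mul_of_nonneg_left (hK k) (abs_nonneg _)
  calc _ ≤ ‖(a n : ℂ) * ∑ i ∈ range (n + 1), z ^ i‖ + ‖(a 1 : ℂ) * ∑ i ∈ range 1, z ^ i‖
        + ∑ j ∈ Ico 1 n, ‖((a (j + 1) - a j : ℝ) : ℂ) * ∑ i ∈ range (j + 1), z ^ i‖ :=
          (norm_sub_le _ _).trans (add_le_add (norm_sub_le _ _) (norm_sum_le _ _))
    _ ≤ C * (2 / ‖z - 1‖) + C * (2 / ‖z - 1‖)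
        + ∑ j ∈ Ico 1 n, |a (j + 1) - a j| * (2 / ‖z - 1‖) := by
          gcongr with j
          · exact (hterm _ _).trans (by gcongr; exact ha n)
          · exact (hterm _ _).trans (by gcongr; exact ha 1)
          · exact hterm _ _
    _ = _ := by rw [← sum_mul]; ring

lemma tendsto_norm_weightedGeomSum_div (ha : ∀ j, |a j| ≤ C)
    (hTV : Tendsto (fun n : ℕ => (∑ j ∈ Icc 1 (n - 1), |a (j + 1) - a j|) / n) atTop (nhds 0))
    {z : ℂ} (hz : ‖z‖ = 1) (hz1 : z ≠ 1) :
    Tendsto (fun n : ℕ => ‖weightedGeomSum a n z‖ / n) atTop (nhds 0) := by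
  set K := 2 / ‖z - 1‖
  have hbound : Tendsto (fun n : ℕ => K * (2 * C / n
      + (∑ j ∈ Icc 1 (n - 1), |a (j + 1) - a j|) / n)) atTop (nhds 0) := by
    simpa using ((tendsto_const_div_atTop_nhds_zero_nat (2 * C)).add hTV).const_mul K
  refine squeeze_zero (fun n => by positivity) (fun n => ?_) hbound
  rw [← add_div, mul_div_assoc']
  gcongr
  exact norm_weightedGeomSum_le ha hz hz1 n

end WeightedGeomSum

section QuadraticForm

variable {ι : Type*} [Fintype ι]

lemma sum_mul_re_sq_eq (a : ℕ → ℝ) (n : ℕ) (c ζ : ι → ℂ) :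
    ∑ j ∈ Icc 1 n, a j * (∑ k, c k * ζ k ^ j).re ^ 2
      = (∑ k, ∑ l, (c k * conj (c l) * weightedGeomSum a n (ζ k * conj (ζ l))
          + c k * c l * weightedGeomSum a n (ζ k * ζ l))).re / 2 := by
  have hre_sq : ∀ w : ℂ, w.re ^ 2 = (w * conj w + w ^ 2).re / 2 := fun w => by
    simp only [Complex.add_re, Complex.mul_re, Complex.conj_re, Complex.conj_im, sq]
    ring
  have hexpand : ∀ j : ℕ, (∑ k, c k * ζ k ^ j) * conj (∑ k, c k * ζ k ^ j)
      + (∑ k, c k * ζ k ^ j) ^ 2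
      = ∑ k, ∑ l, (c k * conj (c l) * (ζ k * conj (ζ l)) ^ j + c k * c l * (ζ k * ζ l) ^ j) := by
    intro j
    simp only [map_sum, sq, sum_mul_sum, ← sum_add_distrib, map_mul, map_pow, mul_pow]
    exact sum_congr rfl fun k _ => sum_congr rfl fun l _ => by ring
  calc _ = (∑ j ∈ Icc 1 n, (a j : ℂ) * ∑ k, ∑ l,
        (c k * conj (c l) * (ζ k * conj (ζ l)) ^ j + c k * c l * (ζ k * ζ l) ^ j)).re / 2 := by
        rw [Complex.re_sum, sum_div]
        refine sum_congr rfl fun j _ => ?_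
        rw [hre_sq, hexpand, Complex.re_ofReal_mul]
        ring
    _ = _ := by
        congr 2
        simp only [weightedGeomSum, mul_sum]
        rw [sum_comm]
        refine sum_congr rfl fun k _ => ?_
        rw [sum_comm]
        refine sum_congr rfl fun l _ => ?_
        rw [← sum_add_distrib]
        exact sum_congr rfl fun j _ => by ring

variable [DecidableEq ι]

/-- The subtracted diagonal term is the main term: `ζ k * conj (ζ k) = 1` for unimodular `ζ`. -/
noncomputable def crossTermBound (a : ℕ → ℝ) (ζ : ι → ℂ) (n : ℕ) : ℝ :=
  (∑ k, ∑ l, (‖weightedGeomSum a n (ζ k * conj (ζ l)) - if k = l then weightedGeomSum a n 1 else 0‖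
    + ‖weightedGeomSum a n (ζ k * ζ l)‖)) / 2

lemma abs_sum_mul_re_sq_sub_le (a : ℕ → ℝ) (n : ℕ) {c : ι → ℂ} (hc : ∀ k, ‖c k‖ ≤ 1)
    (ζ : ι → ℂ) :
    |∑ j ∈ Icc 1 n, a j * (∑ k, c k * ζ k ^ j).re ^ 2
        - (∑ j ∈ Icc 1 n, a j) / 2 * ∑ k, ‖c k‖ ^ 2| ≤ crossTermBound a ζ n := by
  have hdiag : ∑ k, ∑ l, c k * conj (c l) * (if k = l then weightedGeomSum a n 1 else 0)
      = (((∑ j ∈ Icc 1 n, a j) * ∑ k, ‖c k‖ ^ 2 : ℝ) : ℂ) := by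
    simp only [mul_ite, mul_zero, sum_ite_eq, mem_univ, if_true, Complex.mul_conj,
      Complex.normSq_eq_norm_sq, weightedGeomSum, one_pow, mul_one]
    push_cast
    rw [mul_sum]
    exact sum_congr rfl fun k _ => by ring
  rw [sum_mul_re_sq_eq, div_mul_eq_mul_div, ← Complex.ofReal_re (_ * _), ← hdiag, ← sub_div,
    ← Complex.sub_re, ← sum_sub_distrib, abs_div, abs_two, crossTermBound]
  gcongr
  refine (Complex.abs_re_le_norm _).trans ((norm_sum_le _ _).trans (sum_le_sum fun k _ => ?_))
  rw [← sum_sub_distrib]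
  refine (norm_sum_le _ _).trans (sum_le_sum fun l _ => ?_)
  have hck : ‖c k * conj (c l)‖ ≤ 1 := by
    rw [norm_mul, Complex.norm_conj]; exact mul_le_one₀ (hc k) (norm_nonneg _) (hc l)
  have hcc : ‖c k * c l‖ ≤ 1 := by
    rw [norm_mul]; exact mul_le_one₀ (hc k) (norm_nonneg _) (hc l)
  calc _ = ‖c k * conj (c l) * (weightedGeomSum a n (ζ k * conj (ζ l))
          - if k = l then weightedGeomSum a n 1 else 0)
        + c k * c l * weightedGeomSum a n (ζ k * ζ l)‖ := by congr 1; ring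
    _ ≤ _ := by
        refine (norm_add_le _ _).trans (add_le_add ?_ ?_) <;> rw [norm_mul] <;>
          exact mul_le_of_le_one_left (norm_nonneg _) ‹_›

lemma tendsto_crossTermBound_div {a : ℕ → ℝ} {C : ℝ} (ha : ∀ j, |a j| ≤ C)
    (hTV : Tendsto (fun n : ℕ => (∑ j ∈ Icc 1 (n - 1), |a (j + 1) - a j|) / n) atTop (nhds 0))
    {ζ : ι → ℂ} (hζ : ∀ k, ‖ζ k‖ = 1) (hdiff : ∀ k l, k ≠ l → ζ k * conj (ζ l) ≠ 1)
    (hsum : ∀ k l, ζ k * ζ l ≠ 1) :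
    Tendsto (fun n : ℕ => crossTermBound a ζ n / n) atTop (nhds 0) := by
  have hdecay : ∀ z : ℂ, ‖z‖ = 1 → z ≠ 1 →
      Tendsto (fun n : ℕ => ‖weightedGeomSum a n z‖ / n) atTop (nhds 0) :=
    fun z hz hz1 => tendsto_norm_weightedGeomSum_div ha hTV hz hz1
  have hterm : ∀ k l, Tendsto (fun n : ℕ =>
      ‖weightedGeomSum a n (ζ k * conj (ζ l)) - if k = l then weightedGeomSum a n 1 else 0‖ / n
        + ‖weightedGeomSum a n (ζ k * ζ l)‖ / n) atTop (nhds 0) := by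
    intro k l
    rw [← zero_add (0 : ℝ)]
    refine Tendsto.add ?_ (hdecay _ (by rw [norm_mul, hζ, hζ, one_mul]) (hsum k l))
    rcases eq_or_ne k l with rfl | hkl
    · simp [Complex.mul_conj, Complex.normSq_eq_norm_sq, hζ]
    · simpa only [if_neg hkl, sub_zero] using
        hdecay _ (by rw [norm_mul, Complex.norm_conj, hζ, hζ, one_mul]) (hdiff k l hkl)
  simpa [crossTermBound, sum_div, add_div, div_right_comm _ (2 : ℝ)] using
    (tendsto_finsetSum _ fun k _ => tendsto_finsetSum _ fun l _ => hterm k l).div_const 2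

end QuadraticForm

lemma sum_fin_eq_sum_Icc {M : Type*} [AddCommMonoid M] (f : ℕ → M) (n : ℕ) :
    ∑ j : Fin n, f (j + 1) = ∑ j ∈ Icc 1 n, f j := by
  rw [Fin.sum_univ_eq_sum_range (fun j => f (j + 1)), range_eq_Ico, sum_Ico_add' f 0 n 1]
  rfl

section RoPE

variable {m : ℕ}

def blockComplex (x : Fin m × Fin 2 → ℝ) (k : Fin m) : ℂ := ⟨x (k, 0), x (k, 1)⟩

lemma sq_norm_blockComplex (x : Fin m × Fin 2 → ℝ) (k : Fin m) :
    ‖blockComplex x k‖ ^ 2 = x (k, 0) ^ 2 + x (k, 1) ^ 2 := by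
  rw [Complex.sq_norm, blockComplex, Complex.normSq_mk, sq, sq]

lemma sum_sq_norm_blockComplex (x : Fin m × Fin 2 → ℝ) :
    ∑ k, ‖blockComplex x k‖ ^ 2 = eNorm x ^ 2 := by
  simp only [sq_norm_blockComplex, eNorm_sq, Fintype.sum_prod_type, Fin.sum_univ_two]

lemma norm_blockComplex_le (x : Fin m × Fin 2 → ℝ) (k : Fin m) :
    ‖blockComplex x k‖ ≤ eNorm x := by
  rw [← pow_le_pow_iff_left₀ (norm_nonneg _) (eNorm_nonneg _) two_ne_zero,
    ← sum_sq_norm_blockComplex]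
  exact single_le_sum (fun k _ => sq_nonneg ‖blockComplex x k‖) (mem_univ k)

lemma dotProduct_eq_sum_re (x y : Fin m × Fin 2 → ℝ) :
    x ⬝ᵥ y = ∑ k, (blockComplex x k * conj (blockComplex y k)).re := by
  simp only [dotProduct, Fintype.sum_prod_type, Fin.sum_univ_two, blockComplex, Complex.mul_re,
    Complex.conj_re, Complex.conj_im]
  exact sum_congr rfl fun k _ => by ring

lemma blockComplex_ropeRot_mulVec (θ : Fin m → ℝ) (j : ℕ) (x : Fin m × Fin 2 → ℝ) (k : Fin m) :
    blockComplex (ropeRot θ j *ᵥ x) k = Complex.exp (θ k * Complex.I) ^ j * blockComplex x k := by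
  have hrot : ∀ i, (ropeRot θ j *ᵥ x) (k, i) = ∑ i', rot2 (j * θ k) i i' * x (k, i') := by
    simp [ropeRot, blockRot, mulVec, dotProduct, Fintype.sum_prod_type]
  rw [← Complex.exp_nat_mul,
    show (j : ℂ) * (θ k * Complex.I) = ((j * θ k : ℝ) : ℂ) * Complex.I by push_cast; ring]
  apply Complex.ext <;>
    simp only [blockComplex, hrot, Fin.sum_univ_two, rot2, of_apply, cons_val', cons_val_zero,
      cons_val_fin_one, cons_val_one, Complex.mul_re, Complex.mul_im, Complex.exp_ofReal_mul_I_re,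
      Complex.exp_ofReal_mul_I_im] <;> ring

lemma eNorm_ropeRot_mulVec (θ : Fin m → ℝ) (j : ℕ) (x : Fin m × Fin 2 → ℝ) :
    eNorm (ropeRot θ j *ᵥ x) = eNorm x := by
  rw [← sq_eq_sq₀ (eNorm_nonneg _) (eNorm_nonneg _), ← sum_sq_norm_blockComplex,
    ← sum_sq_norm_blockComplex]
  simp only [blockComplex_ropeRot_mulVec, norm_mul, norm_pow, Complex.norm_exp_ofReal_mul_I,
    one_pow, one_mul]

variable {n : ℕ} (θ : Fin m → ℝ) (u : ℕ → ℝ) (v : Fin m × Fin 2 → ℝ)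

lemma ropeRankOne_row (j : Fin n) :
    ropeRankOne θ u v j = u (j + 1) • (ropeRot θ (j + 1) *ᵥ v) :=
  mulVec_smul _ _ _

lemma frobNorm_ropeRankOne_sq :
    frobNorm (ropeRankOne (n := n) θ u v) ^ 2 = (∑ j ∈ Icc 1 n, u j ^ 2) * eNorm v ^ 2 := by
  simp only [frobNorm_sq, ropeRankOne_row, eNorm_smul_sq, eNorm_ropeRot_mulVec, ← sum_mul]
  rw [sum_fin_eq_sum_Icc (fun j => u j ^ 2)]

lemma eNorm_ropeRankOne_mulVec_sq (w : Fin m × Fin 2 → ℝ) :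
    eNorm (ropeRankOne (n := n) θ u v *ᵥ w) ^ 2
      = ∑ j ∈ Icc 1 n, u j ^ 2 * (∑ k, blockComplex v k * conj (blockComplex w k)
          * Complex.exp (θ k * Complex.I) ^ j).re ^ 2 := by
  rw [eNorm_sq, ← sum_fin_eq_sum_Icc]
  refine sum_congr rfl fun j _ => ?_
  rw [show (ropeRankOne θ u v *ᵥ w) j = ropeRankOne θ u v j ⬝ᵥ w from rfl, ropeRankOne_row,
    smul_dotProduct, dotProduct_eq_sum_re, smul_eq_mul, mul_pow, Complex.re_sum]
  simp only [blockComplex_ropeRot_mulVec]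
  congr 3
  exact funext fun k => by rw [mul_rotate]

end RoPE

lemma tendsto_div_of_abs_sub_mul_le {x S ε : ℕ → ℝ} {c L : ℝ} (hc : 0 < c)
    (hS : ∀ n : ℕ, c * n ≤ S n) (hε : Tendsto (fun n : ℕ => ε n / n) atTop (nhds 0))
    (h : ∀ n, |x n - S n * L| ≤ ε n) :
    Tendsto (fun n => x n / S n) atTop (nhds L) := by
  rw [tendsto_iff_norm_sub_tendsto_zero]
  refine squeeze_zero' (Eventually.of_forall fun n => norm_nonneg _) ?_
    (by simpa using hε.div_const c)
  filter_upwards [eventually_gt_atTop 0] with n hn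
  have hSpos : 0 < S n := lt_of_lt_of_le (by positivity) (hS n)
  rw [Real.norm_eq_abs, show x n / S n - L = (x n - S n * L) / S n by field_simp, abs_div,
    abs_of_pos hSpos, div_div, mul_comm (n : ℝ) c]
  exact div_le_div₀ ((abs_nonneg _).trans (h n)) (h n) (by positivity) (hS n)

section SpectralNorm

variable {m : ℕ} (θ : Fin m → ℝ) (u : ℕ → ℝ) {v : Fin m × Fin 2 → ℝ}

lemma blockComplex_single (k₀ k : Fin m) :
    blockComplex (Pi.single (k₀, 0) 1) k = if k = k₀ then 1 else 0 := by
  by_cases h : k = k₀ <;> apply Complex.ext <;> simp [blockComplex, h]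

lemma abs_specNorm_ropeRankOne_sq_sub_le (hv : eNorm v = 1) {M : ℝ}
    (hM : ∀ k, ‖blockComplex v k‖ ^ 2 ≤ M) {k₀ : Fin m} (hk₀ : ‖blockComplex v k₀‖ ^ 2 = M)
    (n : ℕ) :
    |specNorm (ropeRankOne (n := n) θ u v) ^ 2 - (∑ j ∈ Icc 1 n, u j ^ 2) * (M / 2)|
      ≤ crossTermBound (fun j => u j ^ 2) (fun k => Complex.exp (θ k * Complex.I)) n := by
  set S := ∑ j ∈ Icc 1 n, u j ^ 2
  set ε := crossTermBound (fun j => u j ^ 2) (fun k => Complex.exp (θ k * Complex.I)) n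
  have hS : 0 ≤ S := sum_nonneg fun _ _ => sq_nonneg _
  have hquad : ∀ w, eNorm w = 1 → |eNorm (ropeRankOne (n := n) θ u v *ᵥ w) ^ 2
      - S / 2 * ∑ k, ‖blockComplex v k‖ ^ 2 * ‖blockComplex w k‖ ^ 2| ≤ ε := fun w hw => by
    have hc : ∀ k, ‖blockComplex v k * conj (blockComplex w k)‖ ≤ 1 := fun k => by
      rw [norm_mul, Complex.norm_conj]
      exact mul_le_one₀ (hv ▸ norm_blockComplex_le v k) (norm_nonneg _)
        (hw ▸ norm_blockComplex_le w k)
    simpa only [eNorm_ropeRankOne_mulVec_sq, norm_mul, Complex.norm_conj, mul_pow] using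
      abs_sum_mul_re_sq_sub_le (fun j => u j ^ 2) n hc fun k => Complex.exp (θ k * Complex.I)
  have hw₀ : eNorm (Pi.single (k₀, 0) 1 : Fin m × Fin 2 → ℝ) = 1 := by
    rw [← sq_eq_sq₀ (eNorm_nonneg _) zero_le_one, ← sum_sq_norm_blockComplex]
    simp [blockComplex_single, apply_ite]
  refine abs_specNorm_sq_sub_le _ (fun w hw => ?_) ⟨Pi.single (k₀, 0) 1, hw₀, ?_⟩
  · have hle : ∑ k, ‖blockComplex v k‖ ^ 2 * ‖blockComplex w k‖ ^ 2 ≤ M :=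
      calc _ ≤ ∑ k, M * ‖blockComplex w k‖ ^ 2 :=
            sum_le_sum fun k _ => mul_le_mul_of_nonneg_right (hM k) (sq_nonneg _)
        _ = M := by rw [← mul_sum, sum_sq_norm_blockComplex, hw, one_pow, mul_one]
    have := (abs_le.1 (hquad w hw)).2
    nlinarith [mul_le_mul_of_nonneg_left hle hS]
  · have hM₀ : ∑ k, ‖blockComplex v k‖ ^ 2 * ‖blockComplex (Pi.single (k₀, 0) 1) k‖ ^ 2 = M := by
      simp [blockComplex_single, apply_ite, hk₀]
    have := (abs_le.1 (hquad _ hw₀)).1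
    rw [hM₀] at this
    linarith

lemma tendsto_specNorm_ropeRankOne_sq_div (hv : eNorm v = 1) {c₁ c₂ : ℝ} (hc₁ : 0 < c₁)
    (hu : ∀ j, c₁ ≤ |u j| ∧ |u j| ≤ c₂)
    (hTV : Tendsto (fun n : ℕ => (∑ j ∈ Icc 1 (n - 1), |u (j + 1) ^ 2 - u j ^ 2|) / n)
      atTop (nhds 0))
    (hdiff : ∀ k l, k ≠ l →
      Complex.exp (θ k * Complex.I) * conj (Complex.exp (θ l * Complex.I)) ≠ 1)
    (hsum : ∀ k l, Complex.exp (θ k * Complex.I) * Complex.exp (θ l * Complex.I) ≠ 1) {M : ℝ}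
    (hM : ∀ k, ‖blockComplex v k‖ ^ 2 ≤ M) {k₀ : Fin m} (hk₀ : ‖blockComplex v k₀‖ ^ 2 = M) :
    Tendsto (fun n => specNorm (ropeRankOne (n := n) θ u v) ^ 2 / ∑ j ∈ Icc 1 n, u j ^ 2)
      atTop (nhds (M / 2)) := by
  have hu_sq : ∀ j, |u j ^ 2| ≤ c₂ ^ 2 := fun j => by
    rw [abs_pow]
    exact pow_le_pow_left₀ (abs_nonneg _) (hu j).2 2
  have hS : ∀ n : ℕ, c₁ ^ 2 * n ≤ ∑ j ∈ Icc 1 n, u j ^ 2 := fun n =>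
    calc c₁ ^ 2 * n = ∑ j ∈ Icc 1 n, c₁ ^ 2 := by simp [mul_comm]
      _ ≤ _ := sum_le_sum fun j _ => by
          rw [← sq_abs (u j)]
          exact pow_le_pow_left₀ hc₁.le (hu j).1 2
  exact tendsto_div_of_abs_sub_mul_le (pow_pos hc₁ 2) hS
    (tendsto_crossTermBound_div hu_sq hTV (fun k => Complex.norm_exp_ofReal_mul_I _) hdiff hsum)
    (abs_specNorm_ropeRankOne_sq_sub_le θ u hv hM hk₀)

end SpectralNorm

lemma exp_ofReal_mul_I_ne_one {s : ℝ} (hs : Irrational (s / 2 / Real.pi)) :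
    Complex.exp (s * Complex.I) ≠ 1 := by
  rw [Ne, Complex.exp_eq_one_iff]
  rintro ⟨n, hn⟩
  have him := congrArg Complex.im hn
  simp only [Complex.mul_im, Complex.ofReal_re, Complex.I_im, mul_one, Complex.ofReal_im,
    Complex.I_re, mul_zero, add_zero, Complex.intCast_re, Complex.mul_re, Complex.re_ofNat,
    Complex.im_ofNat, sub_zero, zero_mul, Complex.intCast_im, sub_self] at him
  exact hs.ne_int n (by rw [him]; field_simp)

lemma exp_mul_I_mul_exp_mul_I_ne_one {a b : ℝ} (h : Irrational ((a + b) / 2 / Real.pi)) :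
    Complex.exp (a * Complex.I) * Complex.exp (b * Complex.I) ≠ 1 := by
  rw [← Complex.exp_add, ← add_mul, ← Complex.ofReal_add]
  exact exp_ofReal_mul_I_ne_one h

lemma exp_mul_I_mul_conj_ne_one {a b : ℝ} (h : Irrational ((a - b) / 2 / Real.pi)) :
    Complex.exp (a * Complex.I) * conj (Complex.exp (b * Complex.I)) ≠ 1 := by
  rw [← Complex.exp_conj, map_mul, Complex.conj_ofReal, Complex.conj_I, ← Complex.exp_add,
    mul_neg, ← sub_eq_add_neg, ← sub_mul, ← Complex.ofReal_sub]
  exact exp_ofReal_mul_I_ne_one h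

lemma one_le_card_mul_ciSup_of_sum_eq_one {ι : Type*} [Fintype ι] [Nonempty ι] {f : ι → ℝ}
    (hf : ∑ i, f i = 1) : 1 ≤ Fintype.card ι * ⨆ i, f i := by
  have := sum_le_card_nsmul univ f (⨆ i, f i) fun i _ => le_ciSup (Finite.bddAbove_range f) i
  rwa [hf, card_univ, nsmul_eq_mul] at this

lemma ciSup_le_one_of_sum_eq_one {ι : Type*} [Fintype ι] [Nonempty ι] {f : ι → ℝ}
    (hf₀ : ∀ i, 0 ≤ f i) (hf : ∑ i, f i = 1) : ⨆ i, f i ≤ 1 :=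
  ciSup_le fun i => hf ▸ single_le_sum (fun j _ => hf₀ j) (mem_univ i)

theorem stable_rank_ratio_limit_general (m : ℕ) (θ : Fin (m + 1) → ℝ)
    (v : Fin (m + 1) × Fin 2 → ℝ) (hv : eNorm v = 1)
    (u : ℕ → ℝ) (c₁ c₂ : ℝ) (hc₁ : 0 < c₁)
    (hu : ∀ j : ℕ, c₁ ≤ |u j| ∧ |u j| ≤ c₂)
    (hTV : Tendsto
      (fun n : ℕ => (∑ j ∈ Finset.Icc 1 (n - 1), |u (j + 1) ^ 2 - u j ^ 2|) / n)
      atTop (nhds 0))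
    (hirr : ∀ k, Irrational (θ k / Real.pi))
    (hirr' : ∀ k l, k ≠ l →
      Irrational (((θ k + θ l) / 2) / Real.pi) ∧
      Irrational (((θ k - θ l) / 2) / Real.pi)) :
    Tendsto
      (fun n : ℕ =>
        srank (ropeRankOne (n := n) θ u v) /
          srank (Matrix.vecMulVec (fun j : Fin n => u ((j : ℕ) + 1)) v))
      atTop
      (nhds (2 / ⨆ k : Fin (m + 1), ((v (k, 0)) ^ 2 + (v (k, 1)) ^ 2))) ∧
    2 ≤ 2 / ⨆ k : Fin (m + 1), ((v (k, 0)) ^ 2 + (v (k, 1)) ^ 2) ∧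
    2 / (⨆ k : Fin (m + 1), ((v (k, 0)) ^ 2 + (v (k, 1)) ^ 2))
      ≤ (2 * (m + 1) : ℝ) := by
  simp_rw [← sq_norm_blockComplex]
  set M := ⨆ k, ‖blockComplex v k‖ ^ 2
  have hsum_one : ∑ k, ‖blockComplex v k‖ ^ 2 = 1 := by
    rw [sum_sq_norm_blockComplex, hv, one_pow]
  have hM_ge : 1 ≤ (m + 1 : ℝ) * M := by
    simpa using one_le_card_mul_ciSup_of_sum_eq_one hsum_one
  have hM_le : M ≤ 1 := ciSup_le_one_of_sum_eq_one (fun k => sq_nonneg _) hsum_one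
  have hM : 0 < M := pos_of_mul_pos_right (one_pos.trans_le hM_ge) (by positivity)
  refine ⟨?_, by rw [le_div_iff₀ hM]; linarith, by rw [div_le_iff₀ hM]; linarith⟩
  obtain ⟨k₀, hk₀⟩ := exists_eq_ciSup_of_finite (f := fun k => ‖blockComplex v k‖ ^ 2)
  have hsum : ∀ k l, Complex.exp (θ k * Complex.I) * Complex.exp (θ l * Complex.I) ≠ 1 :=
    fun k l => exp_mul_I_mul_exp_mul_I_ne_one <| by
      rcases eq_or_ne k l with rfl | hkl
      · rw [add_self_div_two]; exact hirr k
      · exact (hirr' k l hkl).1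
  have hdiff : ∀ k l, k ≠ l →
      Complex.exp (θ k * Complex.I) * conj (Complex.exp (θ l * Complex.I)) ≠ 1 :=
    fun k l hkl => exp_mul_I_mul_conj_ne_one (hirr' k l hkl).2
  have hspec := tendsto_specNorm_ropeRankOne_sq_div θ u hv hc₁ hu hTV hdiff hsum
    (le_ciSup (Finite.bddAbove_range _)) hk₀
  rw [← inv_div]
  refine (hspec.inv₀ (by positivity)).congr' ?_
  filter_upwards [eventually_ge_atTop 1] with n hn
  have hu_ne : (fun j : Fin n => u ((j : ℕ) + 1)) ≠ 0 :=
    Function.ne_iff.2 ⟨⟨0, hn⟩, abs_pos.1 (hc₁.trans_le (hu 1).1)⟩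
  rw [srank_vecMulVec hu_ne hv, srank, frobNorm_ropeRankOne_sq, hv, one_pow, mul_one, div_one,
    inv_div]

/-- Under the hypotheses ensuring `‖R(X)‖₂/‖X‖₂ → (1/√2) max_k α_k`, with
`max_k α_k > 0`, the stable rank ratio converges:
`srank(R(X))/srank(X) → 2 / max_k α_k²`, which lies in `[2, d]`. -/
theorem stable_rank_ratio_limit (m : ℕ) (θ : Fin (m + 1) → ℝ)
    (v : Fin (m + 1) × Fin 2 → ℝ) (hv : eNorm v = 1)
    (u : ℕ → ℝ) (c₁ c₂ : ℝ) (hc₁ : 0 < c₁)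
    (hu : ∀ j : ℕ, c₁ ≤ |u j| ∧ |u j| ≤ c₂)
    (hTV : Tendsto
      (fun n : ℕ => (∑ j ∈ Finset.Icc 1 (n - 1), |u (j + 1) ^ 2 - u j ^ 2|) / n)
      atTop (nhds 0))
    (hirr : ∀ k, Irrational (θ k / Real.pi))
    (hirr' : ∀ k l, k ≠ l →
      Irrational (((θ k + θ l) / 2) / Real.pi) ∧
      Irrational (((θ k - θ l) / 2) / Real.pi))
    (hα : 0 < ⨆ k : Fin (m + 1), ((v (k, 0)) ^ 2 + (v (k, 1)) ^ 2)) :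
    Tendsto
      (fun n : ℕ =>
        srank (ropeRankOne (n := n) θ u v) /
          srank (Matrix.vecMulVec (fun j : Fin n => u ((j : ℕ) + 1)) v))
      atTop
      (nhds (2 / ⨆ k : Fin (m + 1), ((v (k, 0)) ^ 2 + (v (k, 1)) ^ 2))) ∧
    2 ≤ 2 / ⨆ k : Fin (m + 1), ((v (k, 0)) ^ 2 + (v (k, 1)) ^ 2) ∧
    2 / (⨆ k : Fin (m + 1), ((v (k, 0)) ^ 2 + (v (k, 1)) ^ 2))
      ≤ (2 * (m + 1) : ℝ) :=
  stable_rank_ratio_limit_general m θ v hv u c₁ c₂ hc₁ hu hTV hirr hirr'
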